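/- arXiv:1807.04481 — 2 statements merged into one kernel-verified Lean document; each statement's English description precedes it below -/
import Mathlib

section
/- A real n×n matrix A has all eigenvalues in the open unit disk (is asymptotically stable) if and only if A = S⁻¹UBS for some real n×n matrices S, U, B where S is invertible, U is orthogonal, B is symmetric positive semidefinite, and the spectral norm of B is strictly less than 1. -/
/-! If every eigenvalue of `A` lies in the open unit disk, Gelfand's formula gives `θ < 1` and
`k > 0` with `‖A'ᵏ‖ ≤ 1` for `A' = θ⁻¹ A`. The norm `‖x‖² + ‖A' x‖² + ⋯ + ‖A'ᵏ⁻¹ x‖²` is then not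
increased by `A'`; writing it as `‖S x‖²` makes `S A' S⁻¹` a contraction, so `‖S A S⁻¹‖ ≤ θ`.
The polar decomposition `S A S⁻¹ = U B`, with `B = √((S A S⁻¹)ᵀ (S A S⁻¹))`, keeps this norm in `B`.
Conversely an eigenvalue of `S⁻¹ U B S` is one of `U B`, hence bounded by `‖U B‖ ≤ ‖B‖ < 1`, using
that complexification does not change the spectral norm of a real matrix. -/

open Matrix

/-- Spectral norm (largest singular value) of a real square matrix,
as the operator norm of the induced map on Euclidean space. -/
noncomputable def specNorm {ι : Type*} [Fintype ι] [DecidableEq ι]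
    (B : Matrix ι ι ℝ) : ℝ :=
  ‖Matrix.toEuclideanCLM (𝕜 := ℝ) B‖

/-- Complexification of a real matrix. -/
def mC {ι κ : Type*} (M : Matrix ι κ ℝ) : Matrix ι κ ℂ :=
  M.map (fun x => (x : ℂ))

/-- `μ` is a (complex) eigenvalue of the real matrix `M`. -/
def IsEig {ι : Type*} [Fintype ι] [DecidableEq ι]
    (M : Matrix ι ι ℝ) (μ : ℂ) : Prop :=
  (μ • (1 : Matrix ι ι ℂ) - mC M).det = 0

/-- The eigenvalue `μ` of `M` is semisimple (geometric = algebraic multiplicity),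
expressed as: the kernel of `(M - μI)²` equals the kernel of `M - μI`. -/
def IsSemisimpleEig {ι : Type*} [Fintype ι] [DecidableEq ι]
    (M : Matrix ι ι ℝ) (μ : ℂ) : Prop :=
  ∀ v : ι → ℂ, ((mC M - μ • 1) * (mC M - μ • 1)) *ᵥ v = 0 →
    (mC M - μ • 1) *ᵥ v = 0

/-- A real matrix is stable: all eigenvalues in the closed unit disk and
those on the unit circle are semisimple. -/
def IsStable {ι : Type*} [Fintype ι] [DecidableEq ι]
    (M : Matrix ι ι ℝ) : Prop :=
  ∀ μ : ℂ, IsEig M μ →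
    ‖μ‖ ≤ 1 ∧ (‖μ‖ = 1 → IsSemisimpleEig M μ)

/-- The pencil polynomial `det(μ E - A)` evaluated at `μ ∈ ℂ`. -/
noncomputable def pencil {ι : Type*} [Fintype ι] [DecidableEq ι]
    (E A : Matrix ι ι ℝ) (μ : ℂ) : ℂ :=
  (μ • mC E - mC A).det

/-- Squared Frobenius norm. -/
def froSq {ι κ : Type*} [Fintype ι] [Fintype κ] (M : Matrix ι κ ℝ) : ℝ :=
  ∑ i, ∑ j, (M i j) ^ 2

-- With this norm `‖B‖` is definitionally `specNorm B`.
open scoped Matrix.Norms.L2Operator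

open scoped MatrixOrder ComplexOrder InnerProductSpace

theorem LinearMap.exists_linearIsometry_comp_eq {𝕜 V : Type*} [RCLike 𝕜] [NormedAddCommGroup V]
    [InnerProductSpace 𝕜 V] [FiniteDimensional 𝕜 V] (f g : V →ₗ[𝕜] V)
    (h : ∀ x, ‖g x‖ = ‖f x‖) : ∃ U : V →ₗᵢ[𝕜] V, ∀ x, U (g x) = f x := by
  have hker : ker g ≤ ker f := fun x hx => by
    rw [mem_ker, ← norm_eq_zero, ← h x, norm_eq_zero, ← mem_ker]
    exact hx
  let L : range g →ₗ[𝕜] V := (ker g).liftQ f hker ∘ₗ g.quotKerEquivRange.symm.toLinearMap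
  have hL : ∀ x, L ⟨g x, mem_range_self g x⟩ = f x := fun x => by
    simp [L, quotKerEquivRange_symm_apply_image]
  refine ⟨LinearIsometry.extend ⟨L, ?_⟩, fun x => ?_⟩
  · rintro ⟨_, x, rfl⟩
    exact (congrArg norm (hL x)).trans (h x).symm
  · exact (LinearIsometry.extend_apply _ ⟨g x, mem_range_self g x⟩).trans (hL x)

namespace Matrix

section EuclideanOperator

variable {𝕜 ι : Type*} [RCLike 𝕜] [Fintype ι] [DecidableEq ι]

local notation "T" => toEuclideanCLM (𝕜 := 𝕜) (n := ι)

theorem norm_toEuclideanCLM_apply_sq (M : Matrix ι ι 𝕜) (x : EuclideanSpace 𝕜 ι) :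
    ‖T M x‖ ^ 2 = RCLike.re ⟪T (Mᴴ * M) x, x⟫_𝕜 := by
  rw [map_mul, ← star_eq_conjTranspose, map_star,
    ContinuousLinearMap.apply_norm_sq_eq_inner_adjoint_left]
  rfl

theorem norm_toEuclideanCLM_apply_sq_eq_sum {κ : Type*} {s : Finset κ} {S : Matrix ι ι 𝕜}
    {M : κ → Matrix ι ι 𝕜} (hS : Sᴴ * S = ∑ j ∈ s, (M j)ᴴ * M j) (x : EuclideanSpace 𝕜 ι) :
    ‖T S x‖ ^ 2 = ∑ j ∈ s, ‖T (M j) x‖ ^ 2 := by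
  simp only [norm_toEuclideanCLM_apply_sq, hS, map_sum, _root_.sum_apply, sum_inner]

theorem conjTranspose_mul_self_eq_one_iff (U : Matrix ι ι 𝕜) :
    Uᴴ * U = 1 ↔ ∀ x, ‖T U x‖ = ‖x‖ := by
  rw [ContinuousLinearMap.norm_map_iff_adjoint_comp_self, ← EmbeddingLike.apply_eq_iff_eq T,
    map_mul, map_one, ← star_eq_conjTranspose, map_star]
  rfl

theorem norm_le_one_of_conjTranspose_mul_self_eq_one {U : Matrix ι ι 𝕜} (hU : Uᴴ * U = 1) :
    ‖U‖ ≤ 1 :=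
  ContinuousLinearMap.opNorm_le_bound (T U) zero_le_one fun x => by
    rw [(conjTranspose_mul_self_eq_one_iff U).1 hU x, one_mul]

theorem isUnit_of_norm_le_norm_toEuclideanCLM_apply {S : Matrix ι ι 𝕜}
    (h : ∀ x, ‖x‖ ≤ ‖T S x‖) : IsUnit S := by
  rw [isUnit_iff_isUnit_det, isUnit_iff_ne_zero, Ne, ← exists_mulVec_eq_zero_iff]
  rintro ⟨v, hv, hSv⟩
  have := h (WithLp.toLp 2 v)
  rw [toEuclideanCLM_toLp, hSv, WithLp.toLp_zero, norm_zero, norm_le_zero_iff] at this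
  exact hv (congrArg WithLp.ofLp this)

theorem norm_conj_le_of_norm_apply_le {S A : Matrix ι ι 𝕜} (hS : IsUnit S) {c : ℝ} (hc : 0 ≤ c)
    (h : ∀ x, ‖T S (T A x)‖ ≤ c * ‖T S x‖) : ‖S * A * S⁻¹‖ ≤ c := by
  refine ContinuousLinearMap.opNorm_le_bound (T (S * A * S⁻¹)) hc fun y => ?_
  have hSS : T S (T S⁻¹ y) = y := by
    rw [← mul_apply_eq_comp, ← map_mul, mul_nonsing_inv S ((isUnit_iff_isUnit_det S).1 hS),
      map_one, one_apply_eq_self]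
  calc ‖T (S * A * S⁻¹) y‖ = ‖T S (T A (T S⁻¹ y))‖ := by simp only [map_mul, mul_apply_eq_comp]
    _ ≤ c * ‖T S (T S⁻¹ y)‖ := h _
    _ = c * ‖y‖ := by rw [hSS]

theorem exists_posSemidef_conjTranspose_mul_self_eq {P : Matrix ι ι 𝕜} (hP : P.PosSemidef) :
    ∃ B : Matrix ι ι 𝕜, B.PosSemidef ∧ Bᴴ * B = P := by
  refine ⟨CFC.sqrt P, (CFC.sqrt_nonneg P).posSemidef, ?_⟩
  rw [(CFC.sqrt_nonneg P).posSemidef.isHermitian.eq]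
  exact CFC.sqrt_mul_sqrt_self P hP.nonneg

theorem exists_polar_decomposition (M : Matrix ι ι 𝕜) :
    ∃ U B : Matrix ι ι 𝕜, Uᴴ * U = 1 ∧ B.PosSemidef ∧ ‖B‖ = ‖M‖ ∧ M = U * B := by
  obtain ⟨B, hB, hBM⟩ :=
    exists_posSemidef_conjTranspose_mul_self_eq (posSemidef_conjTranspose_mul_self M)
  have hnorm : ∀ x, ‖T B x‖ = ‖T M x‖ := fun x => by
    rw [← sq_eq_sq₀ (norm_nonneg _) (norm_nonneg _), norm_toEuclideanCLM_apply_sq,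
      norm_toEuclideanCLM_apply_sq, hBM]
  obtain ⟨V, hV⟩ :=
    LinearMap.exists_linearIsometry_comp_eq (T M).toLinearMap (T B).toLinearMap hnorm
  obtain ⟨U, hTU⟩ : ∃ U, T U = V.toContinuousLinearMap := toEuclideanCLM.surjective _
  refine ⟨U, B, (conjTranspose_mul_self_eq_one_iff U).2 fun x => ?_, hB,
    ContinuousLinearMap.opNorm_ext (T B) (T M) hnorm, ?_⟩
  · rw [hTU]
    exact V.norm_map x
  · rw [← EmbeddingLike.apply_eq_iff_eq T, map_mul, hTU]
    ext1 x
    exact (hV x).symm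

open Finset in
theorem exists_isUnit_norm_conj_le_one_of_norm_pow_le_one {A : Matrix ι ι 𝕜} {k : ℕ}
    (hk : 0 < k) (hA : ‖A ^ k‖ ≤ 1) : ∃ S : Matrix ι ι 𝕜, IsUnit S ∧ ‖S * A * S⁻¹‖ ≤ 1 := by
  obtain ⟨S, -, hS⟩ := exists_posSemidef_conjTranspose_mul_self_eq
    (posSemidef_sum (range k) fun j _ => posSemidef_conjTranspose_mul_self (A ^ j))
  have hq := norm_toEuclideanCLM_apply_sq_eq_sum hS
  have hSunit : IsUnit S := isUnit_of_norm_le_norm_toEuclideanCLM_apply fun x => by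
    rw [← sq_le_sq₀ (norm_nonneg _) (norm_nonneg _), hq]
    calc ‖x‖ ^ 2 = ‖T (A ^ 0) x‖ ^ 2 := by simp
      _ ≤ ∑ j ∈ range k, ‖T (A ^ j) x‖ ^ 2 :=
        single_le_sum (f := fun j => ‖T (A ^ j) x‖ ^ 2) (fun j _ => sq_nonneg _) (mem_range.2 hk)
  refine ⟨S, hSunit, norm_conj_le_of_norm_apply_le hSunit zero_le_one fun x => ?_⟩
  have hAk : ‖T (A ^ k) x‖ ≤ ‖x‖ := by
    simpa using (T (A ^ k)).le_of_opNorm_le hA x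
  rw [one_mul, ← sq_le_sq₀ (norm_nonneg _) (norm_nonneg _), hq, hq]
  simp only [← mul_apply_eq_comp, ← map_mul, ← pow_succ]
  -- applying `A` shifts the sum, trading the term `‖x‖²` for `‖Aᵏ x‖² ≤ ‖x‖²`
  have hshift := sum_range_succ (fun j => ‖T (A ^ j) x‖ ^ 2) k
  rw [sum_range_succ', pow_zero, map_one, one_apply_eq_self] at hshift
  linarith [pow_le_pow_left₀ (norm_nonneg _) hAk 2]

end EuclideanOperator

end Matrix

section Complexification

variable {ι : Type*} [Fintype ι]

open WithLp

theorem EuclideanSpace.norm_sq_eq_norm_re_sq_add_norm_im_sq (v : EuclideanSpace ℂ ι) :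
    ‖v‖ ^ 2 = ‖toLp 2 fun i => (v i).re‖ ^ 2 + ‖toLp 2 fun i => (v i).im‖ ^ 2 := by
  rw [EuclideanSpace.norm_sq_eq, EuclideanSpace.real_norm_sq_eq, EuclideanSpace.real_norm_sq_eq,
    ← Finset.sum_add_distrib]
  refine Finset.sum_congr rfl fun i _ => ?_
  rw [Complex.sq_norm, Complex.normSq_apply]
  simp [sq]

theorem EuclideanSpace.norm_toLp_ofReal (x : ι → ℝ) :
    ‖toLp 2 fun i => (x i : ℂ)‖ = ‖toLp 2 x‖ := by
  simp [EuclideanSpace.norm_eq]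

theorem mC_mulVec_re (M : Matrix ι ι ℝ) (w : ι → ℂ) (i : ι) :
    ((mC M *ᵥ w) i).re = (M *ᵥ fun j => (w j).re) i := by
  simp [mC, mulVec, dotProduct]

theorem mC_mulVec_im (M : Matrix ι ι ℝ) (w : ι → ℂ) (i : ι) :
    ((mC M *ᵥ w) i).im = (M *ᵥ fun j => (w j).im) i := by
  simp [mC, mulVec, dotProduct]

theorem mC_mulVec_ofReal (M : Matrix ι ι ℝ) (x : ι → ℝ) :
    (mC M *ᵥ fun i => (x i : ℂ)) = fun i => ((M *ᵥ x) i : ℂ) := by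
  ext i
  simp [mC, mulVec, dotProduct]

variable [DecidableEq ι]

theorem mC_pow (M : Matrix ι ι ℝ) (k : ℕ) : mC (M ^ k) = mC M ^ k :=
  map_pow (Complex.ofRealHom.mapMatrix : Matrix ι ι ℝ →+* _) M k

local notation "T" => toEuclideanCLM (𝕜 := ℝ) (n := ι)
local notation "Tℂ" => toEuclideanCLM (𝕜 := ℂ) (n := ι)

theorem norm_mC (M : Matrix ι ι ℝ) : ‖mC M‖ = ‖M‖ := by
  refine le_antisymm
    (ContinuousLinearMap.opNorm_le_bound (Tℂ (mC M)) (norm_nonneg _) fun v => ?_)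
    (ContinuousLinearMap.opNorm_le_bound (T M) (norm_nonneg _) fun x => ?_)
  · have hre : (toLp 2 fun i => (Tℂ (mC M) v i).re) = T M (toLp 2 fun i => (v i).re) := by
      ext i
      simp [mC_mulVec_re]
    have him : (toLp 2 fun i => (Tℂ (mC M) v i).im) = T M (toLp 2 fun i => (v i).im) := by
      ext i
      simp [mC_mulVec_im]
    rw [← sq_le_sq₀ (norm_nonneg _) (by positivity), mul_pow,
      EuclideanSpace.norm_sq_eq_norm_re_sq_add_norm_im_sq,
      EuclideanSpace.norm_sq_eq_norm_re_sq_add_norm_im_sq v, mul_add, hre, him, ← mul_pow,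
      ← mul_pow]
    gcongr <;> exact (T M).le_opNorm _
  · calc ‖T M x‖ = ‖Tℂ (mC M) (toLp 2 fun i => (x i : ℂ))‖ := by
          simp [mC_mulVec_ofReal, EuclideanSpace.norm_toLp_ofReal]
          rfl
      _ ≤ ‖mC M‖ * ‖x‖ := by
          refine ((Tℂ (mC M)).le_opNorm _).trans_eq ?_
          rw [EuclideanSpace.norm_toLp_ofReal]
          rfl

end Complexification

open Filter in
theorem spectrum.eventually_norm_pow_lt_pow {A : Type*} [NormedRing A] [NormedAlgebra ℂ A]
    [CompleteSpace A] {a : A} {r : ℝ} (h : spectralRadius ℂ a < ENNReal.ofReal r) :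
    ∀ᶠ k in atTop, ‖a ^ k‖ < r ^ k := by
  have hr : 0 < r := ENNReal.ofReal_pos.1 (pos_of_gt h)
  filter_upwards [(pow_norm_pow_one_div_tendsto_nhds_spectralRadius a).eventually (gt_mem_nhds h),
    eventually_ne_atTop 0] with k hk hk0
  rw [ENNReal.ofReal_lt_ofReal_iff hr] at hk
  calc ‖a ^ k‖ = (‖a ^ k‖ ^ (1 / k : ℝ)) ^ k := by
        rw [one_div, Real.rpow_inv_natCast_pow (norm_nonneg _) hk0]
    _ < r ^ k := pow_lt_pow_left₀ hk (by positivity) hk0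

section Eigenvalues

variable {ι : Type*} [Fintype ι] [DecidableEq ι]

theorem isEig_iff_isRoot_charpoly (M : Matrix ι ι ℝ) (μ : ℂ) :
    IsEig M μ ↔ (M.charpoly.map Complex.ofRealHom).IsRoot μ := by
  rw [IsEig, ← charpoly_map, Polynomial.IsRoot.def, eval_charpoly, scalar_apply, smul_one_eq_diagonal]
  rfl

theorem isEig_iff_mem_spectrum (M : Matrix ι ι ℝ) (μ : ℂ) :
    IsEig M μ ↔ μ ∈ spectrum ℂ (mC M) := by
  rw [isEig_iff_isRoot_charpoly, ← charpoly_map, mem_spectrum_iff_isRoot_charpoly]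
  rfl

theorem isEig_inv_mul_mul_iff {S : Matrix ι ι ℝ} (hS : IsUnit S) (M : Matrix ι ι ℝ) (μ : ℂ) :
    IsEig (S⁻¹ * M * S) μ ↔ IsEig M μ := by
  obtain ⟨u, rfl⟩ := hS
  rw [isEig_iff_isRoot_charpoly, isEig_iff_isRoot_charpoly, charpoly_units_conj']

theorem norm_le_of_isEig {M : Matrix ι ι ℝ} {μ : ℂ} (h : IsEig M μ) : ‖μ‖ ≤ ‖M‖ := by
  rw [isEig_iff_mem_spectrum] at h
  cases isEmpty_or_nonempty ι
  · simp at h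
  · rw [← norm_mC]
    exact spectrum.norm_le_norm_of_mem h

theorem spectralRadius_mC_lt_one {M : Matrix ι ι ℝ} (h : ∀ μ, IsEig M μ → ‖μ‖ < 1) :
    spectralRadius ℂ (mC M) < 1 := by
  rcases (spectrum ℂ (mC M)).eq_empty_or_nonempty with he | hne
  · simp [spectralRadius, he]
  · exact_mod_cast spectrum.spectralRadius_lt_of_forall_lt_of_nonempty hne fun μ hμ =>
      (h μ ((isEig_iff_mem_spectrum M μ).2 hμ) : _)

theorem exists_isUnit_norm_conj_lt_one {A : Matrix ι ι ℝ} (h : ∀ μ, IsEig A μ → ‖μ‖ < 1) :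
    ∃ S : Matrix ι ι ℝ, IsUnit S ∧ ‖S * A * S⁻¹‖ < 1 := by
  obtain ⟨θ, -, hρθ, hθ1⟩ := ENNReal.lt_iff_exists_real_btwn.1 (spectralRadius_mC_lt_one h)
  have hθ0 : 0 < θ := ENNReal.ofReal_pos.1 (pos_of_gt hρθ)
  rw [ENNReal.ofReal_lt_one] at hθ1
  obtain ⟨k, hk, hk0⟩ :=
    ((spectrum.eventually_norm_pow_lt_pow hρθ).and (Filter.eventually_gt_atTop 0)).exists
  have hAk : ‖(θ⁻¹ • A) ^ k‖ ≤ 1 := by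
    rw [smul_pow, norm_smul, ← norm_mC, mC_pow, norm_pow, norm_inv, Real.norm_of_nonneg hθ0.le,
      inv_pow]
    exact inv_mul_le_one_of_le₀ hk.le (by positivity)
  obtain ⟨S, hS, hSA⟩ := Matrix.exists_isUnit_norm_conj_le_one_of_norm_pow_le_one hk0 hAk
  refine ⟨S, hS, ?_⟩
  rw [mul_smul_comm, smul_mul_assoc, norm_smul, norm_inv, Real.norm_of_nonneg hθ0.le,
    inv_mul_le_iff₀ hθ0, mul_one] at hSA
  exact hSA.trans_lt hθ1

end Eigenvalues

/-- SUB characterization of asymptotically stable matrices. -/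
theorem stmt1 {n : ℕ} (A : Matrix (Fin n) (Fin n) ℝ) :
    (∀ μ : ℂ, IsEig A μ → ‖μ‖ < 1) ↔
      ∃ S U B : Matrix (Fin n) (Fin n) ℝ,
        IsUnit S ∧ Uᵀ * U = 1 ∧ B.PosSemidef ∧ specNorm B < 1 ∧
        A = S⁻¹ * U * B * S := by
  constructor
  · intro h
    obtain ⟨S, hS, hSA⟩ := exists_isUnit_norm_conj_lt_one h
    obtain ⟨U, B, hU, hB, hBn, hUB⟩ := Matrix.exists_polar_decomposition (S * A * S⁻¹)
    refine ⟨S, U, B, hS, conjTranspose_eq_transpose_of_trivial U ▸ hU, hB, hBn.trans_lt hSA, ?_⟩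
    rw [mul_assoc S⁻¹, ← hUB]
    have hdet := (isUnit_iff_isUnit_det S).1 hS
    simp [Matrix.mul_assoc, nonsing_inv_mul S hdet, nonsing_inv_mul_cancel_left _ _ hdet]
  · rintro ⟨S, U, B, hS, hU, -, hB, rfl⟩ μ hμ
    rw [mul_assoc S⁻¹] at hμ
    calc ‖μ‖ ≤ ‖U * B‖ := norm_le_of_isEig ((isEig_inv_mul_mul_iff hS _ _).1 hμ)
      _ ≤ ‖U‖ * ‖B‖ := norm_mul_le _ _
      _ ≤ 1 * ‖B‖ := by
          gcongr
          exact Matrix.norm_le_one_of_conjTranspose_mul_self_eq_one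
            (conjTranspose_eq_transpose_of_trivial U ▸ hU)
      _ < 1 := by rwa [one_mul]
end

section
/- For the 3×3 matrices E with E₁₁ = 1 and all other entries 0, A = [[1/2, 0, 2],[0, 1, 0],[0, 0, 1]], and the perturbation Δ_E with (Δ_E)₂₂ = ε for ε ∈ (0,1) and zeros elsewhere: the pencil (E + Δ_E, A) is regular and has exactly two finite eigenvalues, 1/2 and 1/ε; in particular 1/ε > 1, so the perturbed pencil has a finite eigenvalue outside the closed unit disk. -/
open Matrix

/-- A small perturbation of `E` makes the pencil unstable: finite eigenvalues
become `1/2` and `1/ε > 1`. -/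
theorem stmt12 (ε : ℝ) (hε0 : 0 < ε) (hε1 : ε < 1) :
    (∃ μ : ℂ, pencil !![(1 : ℝ), 0, 0; 0, ε, 0; 0, 0, 0]
        !![(1 / 2 : ℝ), 0, 2; 0, 1, 0; 0, 0, 1] μ ≠ 0) ∧
    (∀ μ : ℂ, pencil !![(1 : ℝ), 0, 0; 0, ε, 0; 0, 0, 0]
        !![(1 / 2 : ℝ), 0, 2; 0, 1, 0; 0, 0, 1] μ = 0 ↔
        (μ = 1 / 2 ∨ μ = ((ε : ℂ))⁻¹)) ∧
    1 < ‖((ε : ℂ))⁻¹‖ := by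

  have hεC : (ε : ℂ) ≠ 0 := by exact_mod_cast hε0.ne'
  have hkey : ∀ μ : ℂ, pencil !![(1 : ℝ), 0, 0; 0, ε, 0; 0, 0, 0]
      !![(1 / 2 : ℝ), 0, 2; 0, 1, 0; 0, 0, 1] μ
      = -((μ - 1/2) * (μ * ε - 1)) := by
    intro μ
    norm_num [pencil, mC, Matrix.det_fin_three, Matrix.map_apply,
      Matrix.vecHead, Matrix.vecTail, Matrix.cons_val_two]
  refine ⟨⟨0, by rw [hkey]; push_cast; norm_num⟩, ?_, ?_⟩
  · intro μ
    rw [hkey, neg_eq_zero, mul_eq_zero, sub_eq_zero, sub_eq_zero]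
    constructor
    · rintro (h | h)
      · exact Or.inl h
      · exact Or.inr (eq_inv_of_mul_eq_one_left (by linear_combination h))
    · rintro (rfl | rfl)
      · exact Or.inl rfl
      · exact Or.inr (by field_simp)
  · rw [norm_inv, Complex.norm_real, Real.norm_eq_abs, abs_of_pos hε0]
    exact (one_lt_inv₀ hε0).2 hε1
end
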